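/- Let M be a regular irreducible algebraic monoid in M_n(ℂ) and let e ∈ M be an idempotent. Then {rng(f) : f ∈ E(R_e^M)} = {rng(f) : f ∈ E(R_e)} ∩ 𝖦_e^l, where R_e is the 𝓡-class of e in M_n(ℂ) and R_e^M is the 𝓡-class of e in M. -/
import Mathlib


open Matrix

/-- `Mn n` is the multiplicative monoid of `n × n` complex matrices. -/
abbrev Mn (n : ℕ) : Type := Matrix (Fin n) (Fin n) ℂ

/-- A subset of `Mn n` is algebraic if it is the common zero set of a family of
polynomials in the `n²` matrix entries. -/
def IsAlgebraicMatrixSet {n : ℕ} (X : Set (Mn n)) : Prop :=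
  ∃ s : Set (MvPolynomial (Fin n × Fin n) ℂ),
    X = {x | ∀ p ∈ s, MvPolynomial.eval (fun ij => x ij.1 ij.2) p = 0}

/-- `M` is a regular irreducible algebraic monoid in `Mn n`. -/
structure IsRegIrrAlgMonoid {n : ℕ} (M : Set (Mn n)) : Prop where
  one_mem : (1 : Mn n) ∈ M
  mul_mem : ∀ a ∈ M, ∀ b ∈ M, a * b ∈ M
  algebraic : IsAlgebraicMatrixSet M
  regular : ∀ a ∈ M, ∃ x ∈ M, a * x * a = a
  irreducible : ¬ ∃ A B : Set (Mn n), IsAlgebraicMatrixSet A ∧ IsAlgebraicMatrixSet B ∧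
      A ∪ B = M ∧ A ≠ M ∧ B ≠ M

/-- The group of units of the monoid `M` (as a subset of `Mn n`). -/
def unitsOf {n : ℕ} (M : Set (Mn n)) : Set (Mn n) :=
  {u | u ∈ M ∧ ∃ v ∈ M, u * v = 1 ∧ v * u = 1}

def lSet {n : ℕ} (S : Set (Mn n)) (a : Mn n) : Set (Mn n) := {y | ∃ x ∈ S, y = x * a}
def rSet {n : ℕ} (S : Set (Mn n)) (a : Mn n) : Set (Mn n) := {y | ∃ x ∈ S, y = a * x}
def jSet {n : ℕ} (S : Set (Mn n)) (a : Mn n) : Set (Mn n) :=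
  {y | ∃ x ∈ S, ∃ z ∈ S, y = x * a * z}

/-- Green's relation 𝓛 in the monoid `S`: `a 𝓛 b` iff `Sa = Sb`. -/
def GreenL {n : ℕ} (S : Set (Mn n)) (a b : Mn n) : Prop := lSet S a = lSet S b
/-- Green's relation 𝓡 in the monoid `S`: `a 𝓡 b` iff `aS = bS`. -/
def GreenR {n : ℕ} (S : Set (Mn n)) (a b : Mn n) : Prop := rSet S a = rSet S b
/-- Green's relation 𝓓: `a 𝓓 b` iff there is `c ∈ S` with `a 𝓛 c` and `c 𝓡 b`. -/
def GreenD {n : ℕ} (S : Set (Mn n)) (a b : Mn n) : Prop :=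
  ∃ c ∈ S, GreenL S a c ∧ GreenR S c b
/-- Green's relation 𝓙: `a 𝓙 b` iff `SaS = SbS`. -/
def GreenJ {n : ℕ} (S : Set (Mn n)) (a b : Mn n) : Prop := jSet S a = jSet S b

def LClass {n : ℕ} (S : Set (Mn n)) (a : Mn n) : Set (Mn n) := {b ∈ S | GreenL S a b}
def RClass {n : ℕ} (S : Set (Mn n)) (a : Mn n) : Set (Mn n) := {b ∈ S | GreenR S a b}
def DClass {n : ℕ} (S : Set (Mn n)) (a : Mn n) : Set (Mn n) := {b ∈ S | GreenD S a b}
def JClass {n : ℕ} (S : Set (Mn n)) (a : Mn n) : Set (Mn n) := {b ∈ S | GreenJ S a b}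

/-- The set of idempotents in a subset `T`. -/
def idem {n : ℕ} (T : Set (Mn n)) : Set (Mn n) := {x ∈ T | x * x = x}

/-- `rng x` : the row space of `x`, i.e. the image of the linear map `v ↦ v ᵥ* x`
on row vectors (equivalently, the range of `xᵀ *ᵥ ·`). -/
noncomputable def rng {n : ℕ} (x : Mn n) : Submodule ℂ (Fin n → ℂ) :=
  LinearMap.range xᵀ.mulVecLin

/-- `nul x` : the left null space `{v : v ᵥ* x = 0}` of `x`. -/
noncomputable def nul {n : ℕ} (x : Mn n) : Submodule ℂ (Fin n → ℂ) :=
  LinearMap.ker xᵀ.mulVecLin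

namespace S17
open MvPolynomial

variable {n : ℕ}

noncomputable def ev (x : Mn n) : MvPolynomial (Fin n × Fin n) ℂ →+* ℂ :=
  eval (fun ij => x ij.1 ij.2)

noncomputable def lmulP (b : Mn n) (p : MvPolynomial (Fin n × Fin n) ℂ) :
    MvPolynomial (Fin n × Fin n) ℂ :=
  bind₁ (fun ij : Fin n × Fin n => ∑ l, C (b ij.1 l) * X (l, ij.2)) p

lemma ev_lmulP (b x : Mn n) (p : MvPolynomial (Fin n × Fin n) ℂ) :
    ev x (lmulP b p) = ev (b * x) p := by
  unfold ev lmulP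
  rw [show (eval (fun ij : Fin n × Fin n => x ij.1 ij.2) :
      MvPolynomial (Fin n × Fin n) ℂ →+* ℂ)
    = eval₂Hom (RingHom.id ℂ) (fun ij : Fin n × Fin n => x ij.1 ij.2) from rfl,
    eval₂Hom_bind₁]
  refine eval₂Hom_congr rfl ?_ rfl
  funext ij
  simp [Matrix.mul_apply]

-- factorization: row space inclusion gives left factor
lemma exists_left_factor {p q : Mn n} (h : rng p ≤ rng q) : ∃ t : Mn n, p = t * q := by
  have hc : ∀ i : Fin n, ∃ c : Fin n → ℂ, qᵀ.mulVec c = fun l => p i l := by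
    intro i
    have hmem : (fun l => p i l) ∈ rng p := by
      refine ⟨Pi.single i 1, ?_⟩
      funext l
      simp [Matrix.mulVecLin, Matrix.mulVec, dotProduct, Pi.single_apply,
        Finset.sum_ite_eq', Matrix.transpose_apply]
    exact h hmem
  choose c hcspec using hc
  refine ⟨Matrix.of (fun i k => c i k), ?_⟩
  ext i l
  have := congrFun (hcspec i) l
  simp only [Matrix.mulVec, dotProduct, Matrix.transpose_apply] at this
  simp [Matrix.mul_apply, ← this, mul_comm]

lemma rng_mul_le (t q : Mn n) : rng (t * q) ≤ rng q := by
  unfold rng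
  rw [Matrix.transpose_mul, Matrix.mulVecLin_mul]
  exact LinearMap.range_comp_le_range _ _

lemma lemB {a g : Mn n} (hgg : g * g = g) (hga : g * a = a) (hag : a * g = a)
    (hrng : rng a = rng g) :
    ∃ b : Mn n, a * b = g ∧ b * a = g ∧ b * g = b ∧ g * b = b := by
  -- column range inclusion
  have hcol : LinearMap.range a.mulVecLin ≤ LinearMap.range g.mulVecLin := by
    rintro w ⟨v, rfl⟩
    refine ⟨a.mulVec v, ?_⟩
    simp only [Matrix.mulVecLin_apply, Matrix.mulVec_mulVec, hga]
  -- equal ranks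
  have hrank : a.rank = g.rank := by
    have h1 : aᵀ.rank = gᵀ.rank := by
      unfold Matrix.rank
      unfold rng at hrng
      rw [hrng]
    rwa [Matrix.rank_transpose, Matrix.rank_transpose] at h1
  have hcoleq : LinearMap.range a.mulVecLin = LinearMap.range g.mulVecLin := by
    refine Submodule.eq_of_le_of_finrank_eq hcol ?_
    exact hrank
  set W := LinearMap.range g.mulVecLin with hW
  have hmapsto : ∀ x ∈ W, a.mulVecLin x ∈ W := by
    intro x _
    rw [← hcoleq]
    exact ⟨x, rfl⟩
  set φ : W →ₗ[ℂ] W := a.mulVecLin.restrict hmapsto with hφ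
  have hsurj : Function.Surjective φ := by
    rintro ⟨w, hw⟩
    rw [← hcoleq] at hw
    obtain ⟨z, hz⟩ := hw
    refine ⟨⟨g.mulVec z, ⟨z, rfl⟩⟩, ?_⟩
    apply Subtype.ext
    show a.mulVecLin (g.mulVec z) = w
    simp only [Matrix.mulVecLin_apply, Matrix.mulVec_mulVec, hag]
    exact hz
  have hinj : Function.Injective φ := LinearMap.injective_iff_surjective.mpr hsurj
  -- m := a + 1 - g is invertible
  set m : Mn n := a + 1 - g with hm
  have hminj : Function.Injective m.mulVec := by
    intro u v huv
    have h0 : m.mulVec (u - v) = 0 := by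
      rw [Matrix.mulVec_sub, huv, sub_self]
    set w := u - v with hwdef
    have h0' : a.mulVec w + w - g.mulVec w = 0 := by
      have : m.mulVec w = a.mulVec w + w - g.mulVec w := by
        rw [hm, Matrix.sub_mulVec, Matrix.add_mulVec, Matrix.one_mulVec]
      rwa [this] at h0
    have ha0 : a.mulVec w = 0 := by
      have := congrArg g.mulVec h0'
      rw [Matrix.mulVec_zero, Matrix.mulVec_sub, Matrix.mulVec_add,
        Matrix.mulVec_mulVec, Matrix.mulVec_mulVec, hga, hgg] at this
      simpa using this
    have hwg : w = g.mulVec w := by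
      rw [ha0, zero_add] at h0'
      have := sub_eq_zero.mp h0'
      exact this
    have hwW : w ∈ W := ⟨w, hwg.symm⟩
    have : φ ⟨w, hwW⟩ = 0 := by
      apply Subtype.ext
      show a.mulVecLin w = 0
      simpa using ha0
    have := hinj (a₁ := ⟨w, hwW⟩) (a₂ := 0) (by simpa using this)
    have hw0 : w = 0 := by simpa using congrArg Subtype.val this
    exact sub_eq_zero.mp hw0
  have hunit : IsUnit m := Matrix.mulVec_injective_iff_isUnit.mp hminj
  obtain ⟨u, hu⟩ := hunit
  set m' : Mn n := ↑u⁻¹ with hm'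
  have hmm' : m * m' = 1 := by rw [← hu, hm']; exact_mod_cast u.mul_inv
  have hm'm : m' * m = 1 := by rw [← hu, hm']; exact_mod_cast u.inv_mul
  have hgm : g * m = a := by
    rw [hm, Matrix.mul_sub, Matrix.mul_add, mul_one, hga, hgg, add_sub_cancel_right]
  have hmg : m * g = a := by
    rw [hm, Matrix.sub_mul, Matrix.add_mul, one_mul, hag, hgg, add_sub_cancel_right]
  refine ⟨g * m' * g, ?_, ?_, ?_, ?_⟩
  · calc a * (g * m' * g) = (a * g) * m' * g := by noncomm_ring
    _ = (g * m) * m' * g := by rw [hag, hgm]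
    _ = g * (m * m') * g := by noncomm_ring
    _ = g := by rw [hmm', mul_one, hgg]
  · calc (g * m' * g) * a = g * m' * (g * a) := by noncomm_ring
    _ = g * m' * (m * g) := by rw [hga, hmg]
    _ = g * (m' * m) * g := by noncomm_ring
    _ = g := by rw [hm'm, mul_one, hgg]
  · calc (g * m' * g) * g = g * m' * (g * g) := by noncomm_ring
    _ = g * m' * g := by rw [hgg]
  · calc g * (g * m' * g) = (g * g) * m' * g := by noncomm_ring
    _ = g * m' * g := by rw [hgg]

/-- the vanishing ideal of `{a^j : j ≥ k}` -/
noncomputable def Jid (a : Mn n) (k : ℕ) : Ideal (MvPolynomial (Fin n × Fin n) ℂ) where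
  carrier := {p | ∀ j, k ≤ j → ev (a ^ j) p = 0}
  add_mem' := by
    intro p q hp hq j hj
    rw [map_add, hp j hj, hq j hj, add_zero]
  zero_mem' := by intro j hj; rw [map_zero]
  smul_mem' := by
    intro c p hp j hj
    rw [smul_eq_mul, _root_.map_mul, hp j hj, mul_zero]

lemma Jid_mono (a : Mn n) : Monotone (Jid a) := by
  intro k k' hk p hp j hj
  exact hp j (le_trans hk hj)

lemma lemC (M : Set (Mn n)) (hone : (1 : Mn n) ∈ M)
    (hmul : ∀ a ∈ M, ∀ b ∈ M, a * b ∈ M) (halg : IsAlgebraicMatrixSet M)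
    {a g b : Mn n} (haM : a ∈ M)
    (hga : g * a = a) (hab : a * b = g) (hba : b * a = g) (hbg : b * g = b) :
    g ∈ M ∧ b ∈ M := by
  -- powers of a are in M
  have hpow : ∀ j : ℕ, 1 ≤ j → a ^ j ∈ M := by
    intro j hj
    induction j with
    | zero => omega
    | succ j ih =>
      rcases Nat.eq_or_lt_of_le hj with h | h
      · simpa [← h] using haM
      · rw [pow_succ]
        exact hmul _ (ih (by omega)) _ haM
  have hgapow : ∀ j : ℕ, 1 ≤ j → g * a ^ j = a ^ j := by
    intro j hj
    induction j with
    | zero => omega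
    | succ j ih =>
      rcases Nat.eq_or_lt_of_le hj with h | h
      · simpa [← h] using hga
      · rw [pow_succ', ← mul_assoc, hga]
  have hbapow : ∀ j : ℕ, 1 ≤ j → b * a ^ (j + 1) = a ^ j := by
    intro j hj
    rw [pow_succ', ← mul_assoc, hba, hgapow j hj]
  -- stabilization
  obtain ⟨k₀, hk₀⟩ := monotone_stabilizes_iff_noetherian.mpr
    (inferInstance : IsNoetherian (MvPolynomial (Fin n × Fin n) ℂ)
      (MvPolynomial (Fin n × Fin n) ℂ))
    ⟨Jid a, Jid_mono a⟩
  set K := k₀ + 1 with hK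
  have hJK : Jid a (K + 1) = Jid a K := by
    have h1 := hk₀ K (by omega)
    have h2 := hk₀ (K + 1) (by omega)
    simp only [OrderHom.coe_mk] at h1 h2
    rw [← h1, ← h2]
  -- the "zero set" membership predicate
  set Z : ℕ → Set (Mn n) := fun k => {x | ∀ p ∈ Jid a k, ev x p = 0} with hZ
  have hZK : Z (K + 1) = Z K := by rw [hZ]; simp only [hJK]
  have hpowZ : ∀ j k : ℕ, k ≤ j → a ^ j ∈ Z k := fun j k hk p hp => hp j hk
  -- Z K ⊆ M
  have hZM : Z K ⊆ M := by
    obtain ⟨s, hs⟩ := halg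
    intro z hz
    rw [hs]
    intro p hp
    refine hz p ?_
    intro j hj
    have : a ^ j ∈ M := hpow j (by omega)
    rw [hs] at this
    exact this p hp
  -- multiplication by b preserves: z ∈ Z (k+1) → b*z ∈ Z k   (for k ≥ 1)
  have hbZ : ∀ k : ℕ, 1 ≤ k → ∀ z ∈ Z (k + 1), b * z ∈ Z k := by
    intro k hk z hz p hp
    have hq : lmulP b p ∈ Jid a (k + 1) := by
      intro j hj
      obtain ⟨m, rfl⟩ : ∃ m, j = m + 1 := ⟨j - 1, by omega⟩
      rw [ev_lmulP, hbapow m (by omega)]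
      exact hp m (by omega)
    have := hz _ hq
    rwa [ev_lmulP] at this
  -- b^i * a^K ∈ Z K for all i
  have hbiZ : ∀ i : ℕ, b ^ i * a ^ K ∈ Z K := by
    intro i
    induction i with
    | zero => simpa using hpowZ K K le_rfl
    | succ i ih =>
      have : b ^ i * a ^ K ∈ Z (K + 1) := by rw [hZK]; exact ih
      have h2 := hbZ K (by omega) _ this
      rw [← mul_assoc, ← pow_succ'] at h2
      exact h2
  -- b^k * a^k = g for k ≥ 1
  have hbk : ∀ k : ℕ, b ^ (k + 1) * a ^ (k + 1) = g := by
    intro k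
    induction k with
    | zero => simpa using hba
    | succ k ih =>
      calc b ^ (k + 2) * a ^ (k + 2) = b ^ (k + 1) * (b * a ^ (k + 2)) := by
            rw [pow_succ, mul_assoc]
      _ = b ^ (k + 1) * a ^ (k + 1) := by rw [hbapow (k + 1) (by omega)]
      _ = g := ih
  have hgZ : g ∈ Z K := by
    have := hbiZ K
    rw [hK] at this ⊢
    rwa [hbk k₀] at this
  have hgM : g ∈ M := hZM hgZ
  have hbZK : b ∈ Z K := by
    have : g ∈ Z (K + 1) := by rw [hZK]; exact hgZ
    have h2 := hbZ K (by omega) _ this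
    rwa [hbg] at h2
  exact ⟨hgM, hZM hbZK⟩

/-- helper: mutual divisibility within M gives equal rSet. -/
lemma rSet_congr {M : Set (Mn n)} (hmul : ∀ a ∈ M, ∀ b ∈ M, a * b ∈ M)
    {p q : Mn n} (h1 : ∃ m ∈ M, p = q * m) (h2 : ∃ m ∈ M, q = p * m) :
    rSet M p = rSet M q := by
  obtain ⟨m1, hm1, hpq⟩ := h1
  obtain ⟨m2, hm2, hqp⟩ := h2
  apply Set.eq_of_subset_of_subset
  · rintro y ⟨x, hx, rfl⟩
    exact ⟨m1 * x, hmul _ hm1 _ hx, by rw [hpq, mul_assoc]⟩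
  · rintro y ⟨x, hx, rfl⟩
    exact ⟨m2 * x, hmul _ hm2 _ hx, by rw [hqp, mul_assoc]⟩

end S17

open S17 in
/-- For an idempotent `e ∈ M`:
`{rng f : f ∈ E(R_e^M)} = {rng f : f ∈ E(R_e)} ∩ 𝖦_e^l`, where `R_e` is the
`𝓡`-class of `e` in `Mn n`, `R_e^M` the `𝓡`-class of `e` in `M`, and
`𝖦_e^l = {rng x : x ∈ D_e^M}`. -/
theorem stmt_17 {n : ℕ} (M : Set (Mn n)) (hM : IsRegIrrAlgMonoid M)
    (e : Mn n) (he : e ∈ M) (hee : e * e = e) :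
    rng '' idem (RClass M e)
      = (rng '' idem (RClass Set.univ e)) ∩ (rng '' DClass M e) := by
  obtain ⟨hone, hmul, halg, hreg, -⟩ := hM
  ext V
  constructor
  · rintro ⟨f, ⟨⟨hfM, hfR⟩, hff⟩, rfl⟩
    -- hfR : rSet M e = rSet M f
    have hef : ∃ m, e = f * m := by
      have : e ∈ rSet M f := by
        rw [← hfR]; exact ⟨1, hone, (mul_one e).symm⟩
      obtain ⟨m, -, hm⟩ := this; exact ⟨m, hm⟩
    have hfe : ∃ m, f = e * m := by
      have : f ∈ rSet M e := by
        rw [hfR]; exact ⟨1, hone, (mul_one f).symm⟩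
      obtain ⟨m, -, hm⟩ := this; exact ⟨m, hm⟩
    obtain ⟨m1, hm1⟩ := hef
    obtain ⟨m2, hm2⟩ := hfe
    constructor
    · refine ⟨f, ⟨⟨Set.mem_univ f, ?_⟩, hff⟩, rfl⟩
      apply Set.eq_of_subset_of_subset
      · rintro y ⟨x, -, rfl⟩
        exact ⟨m1 * x, Set.mem_univ _, by rw [hm1, mul_assoc]⟩
      · rintro y ⟨x, -, rfl⟩
        exact ⟨m2 * x, Set.mem_univ _, by rw [hm2, mul_assoc]⟩
    · exact ⟨f, ⟨hfM, e, he, rfl, hfR⟩, rfl⟩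
  · rintro ⟨⟨g, ⟨⟨-, hRu⟩, hgg⟩, hVg⟩, ⟨x, ⟨hxM, c, hcM, hLec, hRcx⟩, hVx⟩⟩
    -- hRu : rSet Set.univ e = rSet Set.univ g
    -- hLec : lSet M e = lSet M c ; hRcx : rSet M c = rSet M x
    -- extract matrix witnesses
    obtain ⟨u₁, -, heu₁⟩ : e ∈ rSet Set.univ g := by
      rw [← hRu]; exact ⟨1, Set.mem_univ _, (mul_one e).symm⟩
    obtain ⟨u, huM, hcu⟩ : c ∈ lSet M e := by
      rw [hLec]; exact ⟨1, hone, (one_mul c).symm⟩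
    obtain ⟨u', hu'M, heu'⟩ : e ∈ lSet M c := by
      rw [← hLec]; exact ⟨1, hone, (one_mul e).symm⟩
    obtain ⟨v, hvM, hxv⟩ : x ∈ rSet M c := by
      rw [hRcx]; exact ⟨1, hone, (mul_one x).symm⟩
    obtain ⟨v', hv'M, hcv'⟩ : c ∈ rSet M x := by
      rw [← hRcx]; exact ⟨1, hone, (mul_one c).symm⟩
    -- the connecting element a
    set a : Mn n := e * v with ha
    have haM : a ∈ M := hmul _ he _ hvM
    have hcvv' : c * (v * v') = c := by
      rw [← mul_assoc, ← hxv, ← hcv']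
    have heav' : e = a * v' := by
      have h : a * v' = u' * (c * (v * v')) := by rw [ha, heu']; noncomm_ring
      rw [h, hcvv', ← heu']
    have hau'x : a = u' * x := by rw [ha, heu', hxv, mul_assoc]
    have hxua : x = u * a := by rw [ha, ← mul_assoc, ← hcu, ← hxv]
    -- row space equalities
    have hrng_ax : rng a = rng x := by
      apply le_antisymm
      · rw [hau'x]; exact rng_mul_le u' x
      · rw [hxua]; exact rng_mul_le u a
    have hrng_ag : rng a = rng g := by rw [hrng_ax, hVx, ← hVg]
    -- g * a = a
    have hga : g * a = a := by
      have : a = g * (u₁ * v) := by rw [ha, heu₁, mul_assoc]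
      rw [this, ← mul_assoc, hgg]
    -- a * g = a
    have hag : a * g = a := by
      obtain ⟨t, ht⟩ := exists_left_factor (le_of_eq hrng_ag)
      rw [ht, mul_assoc, hgg]
    -- group inverse
    obtain ⟨b, hab, hba, hbg, hgb⟩ := lemB hgg hga hag hrng_ag
    obtain ⟨hgM, hbM⟩ := lemC M hone hmul halg haM hga hab hba hbg
    -- assemble
    refine ⟨g, ⟨⟨hgM, ?_⟩, hgg⟩, hVg⟩
    have h1 : rSet M e = rSet M a :=
      rSet_congr hmul ⟨v', hv'M, heav'⟩ ⟨v, hvM, ha⟩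
    have h2 : rSet M a = rSet M g :=
      rSet_congr hmul ⟨a, haM, hga.symm⟩ ⟨b, hbM, hab.symm⟩
    exact h1.trans h2
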